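/- arXiv:2603.03107 — 2 statements merged into one kernel-verified Lean document; each statement's English description precedes it below -/
import Mathlib

section
/- Every local minimizer of problem (L) factors through a local minimizer of problem (F): if (Z̄, S̄) ∈ ℒ_(L), then there exist X̄ ∈ ℝ^{m×d} and Ȳ ∈ ℝ^{n×d} with X̄Ȳᵀ = Z̄ such that (X̄, Ȳ, S̄) ∈ ℒ_(F); that is, ℒ_(L) ⊆ {(XYᵀ, S) : (X, Y, S) ∈ ℒ_(F)}. -/
/-!
Pad a rank factorization of `Z` with zero columns to get `Z = XYᵀ` with `X, Y ∈ ℝ^{·×d}` having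
at most `rank Z` nonzero columns each, so `F (X, Y, S) ≤ F₀ (Z, S)`. Conversely
`rank (XYᵀ) ≤ min (nnzc X) (nnzc Y)` gives `F₀ (XYᵀ, S) ≤ F (X, Y, S)` everywhere. As
`(X, Y, S) ↦ (XYᵀ, S)` is continuous and maps the feasible set of (F) into that of (L), the local
minimum of `F₀` at `(Z, S)` pulls back to a local minimum of `F` at `(X, Y, S)`.
-/

open Matrix Set

attribute [local instance] Matrix.frobeniusNormedAddCommGroup

noncomputable section

/-- number of nonzero entries (the ℓ0-norm). -/
def l0 {m n : ℕ} (S : Matrix (Fin m) (Fin n) ℝ) : ℕ :=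
  {p : Fin m × Fin n | S p.1 p.2 ≠ 0}.ncard

/-- number of nonzero columns. -/
def nnzc {m d : ℕ} (X : Matrix (Fin m) (Fin d) ℝ) : ℕ :=
  {i : Fin d | ∃ j, X j i ≠ 0}.ncard

/-- set of local minimizers of `g` on the feasible set `s`. -/
def locMin {α : Type*} [TopologicalSpace α] (g : α → ℝ) (s : Set α) : Set α :=
  {a ∈ s | IsLocalMinOn g s a}

open Function

theorem Set.MapsTo.isLocalMinOn_of_comp_le {α β γ : Type*} [TopologicalSpace α]
    [TopologicalSpace β] [Preorder γ] {F : β → γ} {G : α → γ} {g : α → β} {s : Set α}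
    {t : Set β} {a : α}
    (hst : MapsTo g s t) (hg : ContinuousWithinAt g s a) (hmin : IsLocalMinOn F t (g a))
    (hle : ∀ x ∈ s, F (g x) ≤ G x) (ha : G a ≤ F (g a)) : IsLocalMinOn G s a := by
  filter_upwards [(hg.tendsto_nhdsWithin hst).eventually hmin, self_mem_nhdsWithin]
    with x hx hxs
  exact ha.trans (hx.trans (hle x hxs))

namespace Matrix

theorem exists_mul_transpose_eq {K m n : Type*} [Field K] [Fintype m] [Fintype n]
    (Z : Matrix m n K) :
    ∃ (B : Matrix m (Fin Z.rank) K) (C : Matrix n (Fin Z.rank) K), B * Cᵀ = Z := by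
  rw [rank_eq_finrank_span_cols]
  set V := Submodule.span K (range Z.col)
  let b := Module.finBasis K V
  let col j : V := ⟨Z.col j, Submodule.subset_span ⟨j, rfl⟩⟩
  refine ⟨of fun i k => (b k : m → K) i, of fun j k => b.repr (col j) k, ?_⟩
  ext i j
  have hcol := congrArg (fun v : V => (v : m → K) i) (b.sum_repr (col j))
  simp only [AddSubmonoidClass.coe_finsetSum, SetLike.val_smul, Finset.sum_apply,
    Pi.smul_apply, smul_eq_mul] at hcol
  exact (Finset.sum_congr rfl fun k _ => mul_comm _ _).trans hcol

theorem extend_mul_transpose_extend {R ι κ m n : Type*} [NonUnitalNonAssocSemiring R]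
    [Fintype ι] [Fintype κ] {e : ι → κ} (he : Injective e) (B : Matrix m ι R)
    (C : Matrix n ι R) :
    (of fun i => extend e (B i) 0) * (of fun j => extend e (C j) 0)ᵀ = B * Cᵀ := by
  ext i j
  simp only [mul_apply, transpose_apply, of_apply]
  refine (Fintype.sum_of_injective e he _ _ (fun k hk => ?_) fun k => ?_).symm
  · rw [extend_apply' _ _ _ (by simpa using hk), Pi.zero_apply, zero_mul]
  · rw [he.extend_apply, he.extend_apply]

end Matrix

theorem rank_le_nnzc {m d : ℕ} (X : Matrix (Fin m) (Fin d) ℝ) : X.rank ≤ nnzc X := by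
  classical
  rw [← rank_transpose, nnzc, ncard_eq_toFinset_card']
  refine Xᵀ.rank_le_card_of_support_subset _ fun k hk => ?_
  simpa [funext_iff] using hk

theorem nnzc_extend_le {m r d : ℕ} {e : Fin r → Fin d} (he : Injective e)
    (B : Matrix (Fin m) (Fin r) ℝ) : nnzc (of fun i => extend e (B i) 0) ≤ r := by
  calc nnzc (of fun i => extend e (B i) 0) ≤ (range e).ncard := by
        refine ncard_le_ncard (fun k ⟨j, hj⟩ => ?_)
        by_contra hk
        exact hj (by simp [extend_apply' _ _ _ hk])
    _ = r := by rw [ncard_range_of_injective he, Nat.card_eq_fintype_card, Fintype.card_fin]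

theorem exists_mul_transpose_eq_nnzc_le {m n d : ℕ} (Z : Matrix (Fin m) (Fin n) ℝ)
    (hd : Z.rank ≤ d) : ∃ (X : Matrix (Fin m) (Fin d) ℝ) (Y : Matrix (Fin n) (Fin d) ℝ),
      X * Yᵀ = Z ∧ nnzc X ≤ Z.rank ∧ nnzc Y ≤ Z.rank := by
  obtain ⟨B, C, hBC⟩ := Z.exists_mul_transpose_eq
  have he := Fin.castLE_injective hd
  exact ⟨_, _, (extend_mul_transpose_extend he B C).trans hBC, nnzc_extend_le he B,
    nnzc_extend_le he C⟩

theorem two_mul_rank_mul_transpose_le {m n d : ℕ} (X : Matrix (Fin m) (Fin d) ℝ)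
    (Y : Matrix (Fin n) (Fin d) ℝ) : 2 * (X * Yᵀ).rank ≤ nnzc X + nnzc Y := by
  have hX := (rank_mul_le_left X Yᵀ).trans (rank_le_nnzc X)
  have hY := (rank_mul_le_right X Yᵀ).trans ((rank_transpose Y).trans_le (rank_le_nnzc Y))
  omega

theorem stmt5_general (m n d : ℕ)
    (lam beta : ℝ) (hlam : 0 ≤ lam)
    (f : Matrix (Fin m) (Fin n) ℝ → Matrix (Fin m) (Fin n) ℝ → ℝ)
    (BS : Set (Matrix (Fin m) (Fin n) ℝ))
    (F0 : Matrix (Fin m) (Fin n) ℝ × Matrix (Fin m) (Fin n) ℝ → ℝ)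
    (hF0 : F0 = fun p => f p.1 p.2 + 2 * lam * (p.1.rank : ℝ) + beta * (l0 p.2 : ℝ))
    (feasL : Set (Matrix (Fin m) (Fin n) ℝ × Matrix (Fin m) (Fin n) ℝ))
    (hfeasL : feasL = {p | p.1.rank ≤ d ∧ p.2 ∈ BS})
    (FF : Matrix (Fin m) (Fin d) ℝ × Matrix (Fin n) (Fin d) ℝ × Matrix (Fin m) (Fin n) ℝ → ℝ)
    (hFF : FF = fun t => f (t.1 * t.2.1ᵀ) t.2.2 +
      lam * ((nnzc t.1 : ℝ) + (nnzc t.2.1 : ℝ)) + beta * (l0 t.2.2 : ℝ))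
    (feasF : Set (Matrix (Fin m) (Fin d) ℝ × Matrix (Fin n) (Fin d) ℝ × Matrix (Fin m) (Fin n) ℝ))
    (hfeasF : feasF = {t | t.2.2 ∈ BS}) :
    locMin F0 feasL ⊆ (fun t => (t.1 * t.2.1ᵀ, t.2.2)) '' locMin FF feasF := by
  have hmaps : MapsTo (fun t => (t.1 * t.2.1ᵀ, t.2.2)) feasF feasL := by
    subst hfeasF hfeasL
    exact fun t ht => ⟨(rank_mul_le_left _ _).trans (rank_le_width _), ht⟩
  subst hF0 hfeasL hFF hfeasF
  rintro ⟨Z, S⟩ ⟨⟨hZd, hS⟩, hmin⟩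
  obtain ⟨X, Y, rfl, hX, hY⟩ := exists_mul_transpose_eq_nnzc_le Z hZd
  refine ⟨(X, Y, S), ⟨hS, hmaps.isLocalMinOn_of_comp_le (by fun_prop) hmin (fun t _ => ?_) ?_⟩,
    rfl⟩
  · have hrank : 2 * ((t.1 * t.2.1ᵀ).rank : ℝ) ≤ nnzc t.1 + nnzc t.2.1 := by
      exact_mod_cast two_mul_rank_mul_transpose_le t.1 t.2.1
    dsimp only
    linarith [mul_le_mul_of_nonneg_left hrank hlam]
  · have hnnzc : (nnzc X : ℝ) + nnzc Y ≤ 2 * ((X * Yᵀ).rank : ℝ) := by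
      exact_mod_cast (by omega)
    dsimp only
    linarith [mul_le_mul_of_nonneg_left hnnzc hlam]

/-- Every local minimizer of problem (L) factors through a local minimizer of (F):
`ℒ_(L) ⊆ {(XYᵀ, S) : (X, Y, S) ∈ ℒ_(F)}`. -/
theorem stmt5 (m n d : ℕ) (hm : 0 < m) (hn : 0 < n) (hd : 0 < d)
    (lam beta : ℝ) (hlam : 0 ≤ lam) (hbeta : 0 ≤ beta)
    (f : Matrix (Fin m) (Fin n) ℝ → Matrix (Fin m) (Fin n) ℝ → ℝ)
    (hf0 : ∀ Z S, 0 ≤ f Z S)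
    (hfLip : LocallyLipschitz fun p : Matrix (Fin m) (Fin n) ℝ × Matrix (Fin m) (Fin n) ℝ =>
      f p.1 p.2)
    (κ1 κ2 : Fin m → Fin n → EReal)
    (hκ1 : ∀ i j, κ1 i j ≤ 0) (hκ2 : ∀ i j, 0 ≤ κ2 i j)
    (BS : Set (Matrix (Fin m) (Fin n) ℝ))
    (hBS : BS = {S | ∀ i j, κ1 i j ≤ (S i j : EReal) ∧ (S i j : EReal) ≤ κ2 i j})
    (F0 : Matrix (Fin m) (Fin n) ℝ × Matrix (Fin m) (Fin n) ℝ → ℝ)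
    (hF0 : F0 = fun p => f p.1 p.2 + 2 * lam * (p.1.rank : ℝ) + beta * (l0 p.2 : ℝ))
    (feasL : Set (Matrix (Fin m) (Fin n) ℝ × Matrix (Fin m) (Fin n) ℝ))
    (hfeasL : feasL = {p | p.1.rank ≤ d ∧ p.2 ∈ BS})
    (FF : Matrix (Fin m) (Fin d) ℝ × Matrix (Fin n) (Fin d) ℝ × Matrix (Fin m) (Fin n) ℝ → ℝ)
    (hFF : FF = fun t => f (t.1 * t.2.1ᵀ) t.2.2 +
      lam * ((nnzc t.1 : ℝ) + (nnzc t.2.1 : ℝ)) + beta * (l0 t.2.2 : ℝ))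
    (feasF : Set (Matrix (Fin m) (Fin d) ℝ × Matrix (Fin n) (Fin d) ℝ × Matrix (Fin m) (Fin n) ℝ))
    (hfeasF : feasF = {t | t.2.2 ∈ BS}) :
    locMin F0 feasL ⊆ (fun t => (t.1 * t.2.1ᵀ, t.2.2)) '' locMin FF feasF :=
  stmt5_general m n d lam beta hlam f BS F0 hF0 feasL hfeasL FF hFF feasF hfeasF
end
end

section
/- Suppose the minimum of problem (FR) with relaxation function θ is attained and every global minimizer of (FR with θ) satisfies property (C2). Then for every function θ̄ : [0,∞) → [0,∞) with θ(t) ≤ θ̄(t) ≤ ϑ(t) for all t ≥ 0, where ϑ(0) = 0 and ϑ(t) = 1 for t > 0, one has 𝒢_(FB) = 𝒢_(FR with θ̄) and V_(FB) = V_(FR with θ̄), where (FR with θ̄) is the relaxation problem built from θ̄ with the same parameters r, s. -/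
open Matrix Set
open scoped ENNReal

attribute [local instance] Matrix.frobeniusNormedAddCommGroup

noncomputable section

/-- Euclidean norm of the `i`-th column. -/
def colNorm {m d : ℕ} (X : Matrix (Fin m) (Fin d) ℝ) (i : Fin d) : ℝ :=
  Real.sqrt (∑ j, (X j i) ^ 2)

/-- set of global minimizers of `g` on the feasible set `s`. -/
def globMin {α : Type*} (g : α → ℝ) (s : Set α) : Set α :=
  {a ∈ s | ∀ b ∈ s, g a ≤ g b}

/-- optimal value of the problem of minimizing `g` over `s`. -/
def optVal {α : Type*} (g : α → ℝ) (s : Set α) : ℝ :=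
  sInf (g '' s)

/-- property (C2) for a triple `(X, Y, S)` with parameters `r, s`. -/
def propC2 {m n d : ℕ} (lam beta r s : ℝ)
    (t : Matrix (Fin m) (Fin d) ℝ × Matrix (Fin n) (Fin d) ℝ × Matrix (Fin m) (Fin n) ℝ) : Prop :=
  (0 < lam → ∀ i, colNorm t.1 i ∉ Set.Ioo 0 r ∧ colNorm t.2.1 i ∉ Set.Ioo 0 r) ∧
  (0 < beta → ∀ i j, |t.2.2 i j| ∉ Set.Ioo 0 s)

/-! Every minimizer `t⋆` of `F_θ` satisfies (C2), so the inequalities `F_θ ≤ F_θ̄ ≤ F`, which hold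
everywhere because `θ ≤ θ̄ ≤ ϑ`, are equalities at `t⋆`. Hence `t⋆` minimizes all three objectives
with one common value, and a minimizer of `F` or of `F_θ̄` is then a minimizer of `F_θ`, so it
satisfies (C2) as well and the three objectives agree there too. -/

section Sandwich

variable {α : Type*} {g g₁ g₂ g₃ : α → ℝ} {s : Set α}

lemma optVal_eq_of_mem_globMin {a : α} (ha : a ∈ globMin g s) : optVal g s = g a :=
  IsLeast.csInf_eq ⟨mem_image_of_mem g ha.1, by rintro _ ⟨b, hb, rfl⟩; exact ha.2 b hb⟩

theorem globMin_eq_and_optVal_eq_of_sandwich (h₁₂ : ∀ a ∈ s, g₁ a ≤ g₂ a)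
    (h₂₃ : ∀ a ∈ s, g₂ a ≤ g₃ a) (heq : ∀ a ∈ globMin g₁ s, g₁ a = g₃ a)
    (hne : (globMin g₁ s).Nonempty) :
    globMin g₃ s = globMin g₂ s ∧ optVal g₃ s = optVal g₂ s := by
  obtain ⟨a, ha⟩ := hne
  have hlow : ∀ b ∈ s, g₃ a ≤ g₁ b := fun b hb => (heq a ha).symm.trans_le (ha.2 b hb)
  have ha₂ : a ∈ globMin g₂ s :=
    ⟨ha.1, fun b hb => ((h₂₃ a ha.1).trans (hlow b hb)).trans (h₁₂ b hb)⟩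
  have ha₃ : a ∈ globMin g₃ s :=
    ⟨ha.1, fun b hb => ((hlow b hb).trans (h₁₂ b hb)).trans (h₂₃ b hb)⟩
  have hval : g₂ a = g₃ a := le_antisymm (h₂₃ a ha.1) ((hlow a ha.1).trans (h₁₂ a ha.1))
  refine ⟨Set.ext fun t => ⟨fun ht => ?_, fun ht => ?_⟩, ?_⟩
  · refine ⟨ht.1, fun b hb => ?_⟩
    calc g₂ t ≤ g₃ t := h₂₃ t ht.1
      _ ≤ g₃ a := ht.2 a ha.1
      _ ≤ g₂ b := (hlow b hb).trans (h₁₂ b hb)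
  · have ht₁ : t ∈ globMin g₁ s := ⟨ht.1, fun b hb =>
      (h₁₂ t ht.1).trans ((ht.2 a ha.1).trans ((h₂₃ a ha.1).trans (hlow b hb)))⟩
    refine ⟨ht.1, fun b hb => ?_⟩
    calc g₃ t = g₁ t := (heq t ht₁).symm
      _ ≤ g₁ b := ht₁.2 b hb
      _ ≤ g₃ b := (h₁₂ b hb).trans (h₂₃ b hb)
  · rw [optVal_eq_of_mem_globMin ha₃, optVal_eq_of_mem_globMin ha₂, hval]

end Sandwich

section Counting

variable {ι : Type*} [Fintype ι] {g : ℝ → ℝ} {a : ι → ℝ} {r : ℝ}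

lemma ncard_ne_zero_eq_sum (a : ι → ℝ) :
    ({i | a i ≠ 0}.ncard : ℝ) = ∑ i, if a i ≠ 0 then 1 else 0 := by
  classical
  rw [Finset.sum_boole, Set.ncard_eq_toFinset_card', Set.toFinset_ofPred]

lemma sum_comp_div_le_ncard (hg : ∀ t, 0 ≤ t → g t ≤ if 0 < t then 1 else 0)
    (ha : ∀ i, 0 ≤ a i) (hr : 0 < r) :
    ∑ i, g (a i / r) ≤ ({i | a i ≠ 0}.ncard : ℝ) := by
  rw [ncard_ne_zero_eq_sum]
  refine Finset.sum_le_sum fun i _ => (hg _ (div_nonneg (ha i) hr.le)).trans_eq ?_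
  simp only [div_pos_iff_of_pos_right hr, (ha i).lt_iff_ne', ne_eq]

lemma sum_comp_div_eq_ncard (hg0 : g 0 = 0) (hg1 : ∀ t, 1 ≤ t → g t = 1)
    (ha : ∀ i, 0 ≤ a i) (hgap : ∀ i, a i ∉ Ioo 0 r) (hr : 0 < r) :
    ∑ i, g (a i / r) = ({i | a i ≠ 0}.ncard : ℝ) := by
  rw [ncard_ne_zero_eq_sum]
  refine Finset.sum_congr rfl fun i _ => ?_
  rcases (ha i).eq_or_lt' with h | h
  · simp [h, hg0]
  · have hri : r ≤ a i := not_lt.mp fun hlt => hgap i ⟨h, hlt⟩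
    rw [if_pos h.ne', hg1 _ ((one_le_div hr).mpr hri)]

end Counting

lemma colNorm_nonneg {m d : ℕ} (X : Matrix (Fin m) (Fin d) ℝ) (i : Fin d) : 0 ≤ colNorm X i :=
  Real.sqrt_nonneg _

lemma colNorm_eq_zero_iff {m d : ℕ} (X : Matrix (Fin m) (Fin d) ℝ) (i : Fin d) :
    colNorm X i = 0 ↔ ∀ j, X j i = 0 := by
  rw [colNorm, Real.sqrt_eq_zero (by positivity),
    Finset.sum_eq_zero_iff_of_nonneg fun j _ => sq_nonneg _]
  simp

lemma nnzc_eq_ncard_colNorm_ne_zero {m d : ℕ} (X : Matrix (Fin m) (Fin d) ℝ) :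
    nnzc X = {i | colNorm X i ≠ 0}.ncard := by
  simp only [nnzc, ne_eq, colNorm_eq_zero_iff, not_forall]

lemma l0_eq_ncard_abs_ne_zero {m n : ℕ} (S : Matrix (Fin m) (Fin n) ℝ) :
    l0 S = {p : Fin m × Fin n | |S p.1 p.2| ≠ 0}.ncard := by
  simp only [l0, ne_eq, abs_eq_zero]

section Objectives

variable {m n d : ℕ} (f : Matrix (Fin m) (Fin n) ℝ → Matrix (Fin m) (Fin n) ℝ → ℝ) (lam beta : ℝ)

def fbObjective (t : Matrix (Fin m) (Fin d) ℝ × Matrix (Fin n) (Fin d) ℝ × Matrix (Fin m) (Fin n) ℝ) :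
    ℝ :=
  f (t.1 * t.2.1ᵀ) t.2.2 + lam * ((nnzc t.1 : ℝ) + (nnzc t.2.1 : ℝ)) + beta * (l0 t.2.2 : ℝ)

def frObjective (r s : ℝ) (g : ℝ → ℝ)
    (t : Matrix (Fin m) (Fin d) ℝ × Matrix (Fin n) (Fin d) ℝ × Matrix (Fin m) (Fin n) ℝ) : ℝ :=
  f (t.1 * t.2.1ᵀ) t.2.2 +
    lam * ((∑ i, g (colNorm t.1 i / r)) + ∑ i, g (colNorm t.2.1 i / r)) +
    beta * ∑ i, ∑ j, g (|t.2.2 i j| / s)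

variable {f lam beta} {r s : ℝ} {g h : ℝ → ℝ}
  (t : Matrix (Fin m) (Fin d) ℝ × Matrix (Fin n) (Fin d) ℝ × Matrix (Fin m) (Fin n) ℝ)

lemma frObjective_mono (hgh : ∀ x, 0 ≤ x → g x ≤ h x) (hlam : 0 ≤ lam) (hbeta : 0 ≤ beta)
    (hr : 0 ≤ r) (hs : 0 ≤ s) : frObjective f lam beta r s g t ≤ frObjective f lam beta r s h t := by
  unfold frObjective
  gcongr <;> exact hgh _ (div_nonneg (by first | exact colNorm_nonneg _ _ | positivity) ‹_›)

lemma frObjective_le_fbObjective (hg : ∀ x, 0 ≤ x → g x ≤ if 0 < x then 1 else 0)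
    (hlam : 0 ≤ lam) (hbeta : 0 ≤ beta) (hr : 0 < r) (hs : 0 < s) :
    frObjective f lam beta r s g t ≤ fbObjective f lam beta t := by
  unfold frObjective fbObjective
  rw [nnzc_eq_ncard_colNorm_ne_zero, nnzc_eq_ncard_colNorm_ne_zero, l0_eq_ncard_abs_ne_zero,
    ← Fintype.sum_prod_type (fun p : Fin m × Fin n => g (|t.2.2 p.1 p.2| / s))]
  gcongr
  · exact sum_comp_div_le_ncard hg (colNorm_nonneg _) hr
  · exact sum_comp_div_le_ncard hg (colNorm_nonneg _) hr
  · exact sum_comp_div_le_ncard hg (fun _ => abs_nonneg _) hs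

lemma frObjective_eq_fbObjective_of_propC2 (hg0 : g 0 = 0) (hg1 : ∀ x, 1 ≤ x → g x = 1)
    (hlam : 0 ≤ lam) (hbeta : 0 ≤ beta) (hr : 0 < r) (hs : 0 < s) (hC2 : propC2 lam beta r s t) :
    frObjective f lam beta r s g t = fbObjective f lam beta t := by
  obtain ⟨hcols, hentries⟩ := hC2
  have hcolSum : lam * ((∑ i, g (colNorm t.1 i / r)) + ∑ i, g (colNorm t.2.1 i / r)) =
      lam * ((nnzc t.1 : ℝ) + (nnzc t.2.1 : ℝ)) := by
    rcases hlam.eq_or_lt with rfl | hlam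
    · simp
    rw [nnzc_eq_ncard_colNorm_ne_zero, nnzc_eq_ncard_colNorm_ne_zero,
      sum_comp_div_eq_ncard hg0 hg1 (colNorm_nonneg _) (fun i => (hcols hlam i).1) hr,
      sum_comp_div_eq_ncard hg0 hg1 (colNorm_nonneg _) (fun i => (hcols hlam i).2) hr]
  have hentrySum : beta * ∑ i, ∑ j, g (|t.2.2 i j| / s) = beta * (l0 t.2.2 : ℝ) := by
    rcases hbeta.eq_or_lt with rfl | hbeta
    · simp
    rw [l0_eq_ncard_abs_ne_zero,
      ← Fintype.sum_prod_type (fun p : Fin m × Fin n => g (|t.2.2 p.1 p.2| / s)),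
      sum_comp_div_eq_ncard hg0 hg1 (fun _ => abs_nonneg _) (fun p : Fin m × Fin n => hentries hbeta p.1 p.2) hs]
  rw [frObjective, fbObjective, hcolSum, hentrySum]

end Objectives

theorem stmt7_general (m n d : ℕ)
    (lam beta : ℝ) (hlam : 0 ≤ lam) (hbeta : 0 ≤ beta)
    (f : Matrix (Fin m) (Fin n) ℝ → Matrix (Fin m) (Fin n) ℝ → ℝ)
    (feasFB : Set (Matrix (Fin m) (Fin d) ℝ × Matrix (Fin n) (Fin d) ℝ × Matrix (Fin m) (Fin n) ℝ))
    (FF : Matrix (Fin m) (Fin d) ℝ × Matrix (Fin n) (Fin d) ℝ × Matrix (Fin m) (Fin n) ℝ → ℝ)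
    (hFF : FF = fun t => f (t.1 * t.2.1ᵀ) t.2.2 +
      lam * ((nnzc t.1 : ℝ) + (nnzc t.2.1 : ℝ)) + beta * (l0 t.2.2 : ℝ))
    -- the relaxation function θ
    (θ : ℝ → ℝ) (hθ0 : θ 0 = 0) (hθ1 : ∀ t, 1 ≤ t → θ t = 1)
    -- parameters r, s > 0 and the relaxed objective built from θ
    (r s : ℝ) (hr : 0 < r) (hs : 0 < s)
    (FR : Matrix (Fin m) (Fin d) ℝ × Matrix (Fin n) (Fin d) ℝ × Matrix (Fin m) (Fin n) ℝ → ℝ)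
    (hFR : FR = fun t => f (t.1 * t.2.1ᵀ) t.2.2 +
      lam * ((∑ i, θ (colNorm t.1 i / r)) + ∑ i, θ (colNorm t.2.1 i / r)) +
      beta * ∑ i, ∑ j, θ (|t.2.2 i j| / s))
    -- the minimum of (FR with θ) is attained and its minimizers satisfy (C2)
    (hne : (globMin FR feasFB).Nonempty)
    (hC2 : ∀ t ∈ globMin FR feasFB, propC2 lam beta r s t)
    -- the function θ̄ with θ ≤ θ̄ ≤ ϑ, where ϑ(0)=0 and ϑ(t)=1 for t>0
    (θbar : ℝ → ℝ)
    (hθbar : ∀ t, 0 ≤ t → θ t ≤ θbar t ∧ θbar t ≤ (if 0 < t then (1 : ℝ) else 0))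
    -- the relaxed objective built from θ̄ with the same parameters r, s
    (FRbar : Matrix (Fin m) (Fin d) ℝ × Matrix (Fin n) (Fin d) ℝ × Matrix (Fin m) (Fin n) ℝ → ℝ)
    (hFRbar : FRbar = fun t => f (t.1 * t.2.1ᵀ) t.2.2 +
      lam * ((∑ i, θbar (colNorm t.1 i / r)) + ∑ i, θbar (colNorm t.2.1 i / r)) +
      beta * ∑ i, ∑ j, θbar (|t.2.2 i j| / s)) :
    globMin FF feasFB = globMin FRbar feasFB ∧ optVal FF feasFB = optVal FRbar feasFB := by
  obtain rfl : FF = fbObjective f lam beta := hFF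
  obtain rfl : FR = frObjective f lam beta r s θ := hFR
  obtain rfl : FRbar = frObjective f lam beta r s θbar := hFRbar
  exact globMin_eq_and_optVal_eq_of_sandwich
    (fun t _ => frObjective_mono t (fun x hx => (hθbar x hx).1) hlam hbeta hr.le hs.le)
    (fun t _ => frObjective_le_fbObjective t (fun x hx => (hθbar x hx).2) hlam hbeta hr hs)
    (fun t ht => frObjective_eq_fbObjective_of_propC2 t hθ0 hθ1 hlam hbeta hr hs (hC2 t ht)) hne

/-- If the minimum of (FR with θ) is attained and its global minimizers satisfy (C2), then
for any `θ̄` with `θ ≤ θ̄ ≤ ϑ` one has `𝒢_(FB) = 𝒢_(FR with θ̄)` and `V_(FB) = V_(FR with θ̄)`. -/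
theorem stmt7 (m n d : ℕ) (hm : 0 < m) (hn : 0 < n) (hd : 0 < d)
    (lam beta : ℝ) (hlam : 0 ≤ lam) (hbeta : 0 ≤ beta)
    (f : Matrix (Fin m) (Fin n) ℝ → Matrix (Fin m) (Fin n) ℝ → ℝ)
    (hf0 : ∀ Z S, 0 ≤ f Z S)
    (hfLip : LocallyLipschitz fun p : Matrix (Fin m) (Fin n) ℝ × Matrix (Fin m) (Fin n) ℝ =>
      f p.1 p.2)
    (κ1 κ2 : Fin m → Fin n → EReal)
    (hκ1 : ∀ i j, κ1 i j ≤ 0) (hκ2 : ∀ i j, 0 ≤ κ2 i j)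
    (BS : Set (Matrix (Fin m) (Fin n) ℝ))
    (hBS : BS = {S | ∀ i j, κ1 i j ≤ (S i j : EReal) ∧ (S i j : EReal) ≤ κ2 i j})
    (τ : ℝ≥0∞)
    (BX : Set (Matrix (Fin m) (Fin d) ℝ))
    (hBX : BX = {X | ∀ i, ENNReal.ofReal (colNorm X i) ≤ τ})
    (BY : Set (Matrix (Fin n) (Fin d) ℝ))
    (hBY : BY = {Y | ∀ i, ENNReal.ofReal (colNorm Y i) ≤ τ})
    (feasFB : Set (Matrix (Fin m) (Fin d) ℝ × Matrix (Fin n) (Fin d) ℝ × Matrix (Fin m) (Fin n) ℝ))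
    (hfeasFB : feasFB = {t | t.1 ∈ BX ∧ t.2.1 ∈ BY ∧ t.2.2 ∈ BS})
    (FF : Matrix (Fin m) (Fin d) ℝ × Matrix (Fin n) (Fin d) ℝ × Matrix (Fin m) (Fin n) ℝ → ℝ)
    (hFF : FF = fun t => f (t.1 * t.2.1ᵀ) t.2.2 +
      lam * ((nnzc t.1 : ℝ) + (nnzc t.2.1 : ℝ)) + beta * (l0 t.2.2 : ℝ))
    -- the relaxation function θ
    (θ : ℝ → ℝ) (hθ0 : θ 0 = 0) (hθnn : ∀ t, 0 ≤ t → 0 ≤ θ t)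
    (hθ01 : ∀ t, 0 < t → t < 1 → θ t ≤ 1) (hθ1 : ∀ t, 1 ≤ t → θ t = 1)
    -- parameters r, s > 0 and the relaxed objective built from θ
    (r s : ℝ) (hr : 0 < r) (hs : 0 < s)
    (FR : Matrix (Fin m) (Fin d) ℝ × Matrix (Fin n) (Fin d) ℝ × Matrix (Fin m) (Fin n) ℝ → ℝ)
    (hFR : FR = fun t => f (t.1 * t.2.1ᵀ) t.2.2 +
      lam * ((∑ i, θ (colNorm t.1 i / r)) + ∑ i, θ (colNorm t.2.1 i / r)) +
      beta * ∑ i, ∑ j, θ (|t.2.2 i j| / s))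
    -- the minimum of (FR with θ) is attained and its minimizers satisfy (C2)
    (hne : (globMin FR feasFB).Nonempty)
    (hC2 : ∀ t ∈ globMin FR feasFB, propC2 lam beta r s t)
    -- the function θ̄ with θ ≤ θ̄ ≤ ϑ, where ϑ(0)=0 and ϑ(t)=1 for t>0
    (θbar : ℝ → ℝ)
    (hθbar : ∀ t, 0 ≤ t → θ t ≤ θbar t ∧ θbar t ≤ (if 0 < t then (1 : ℝ) else 0))
    -- the relaxed objective built from θ̄ with the same parameters r, s
    (FRbar : Matrix (Fin m) (Fin d) ℝ × Matrix (Fin n) (Fin d) ℝ × Matrix (Fin m) (Fin n) ℝ → ℝ)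
    (hFRbar : FRbar = fun t => f (t.1 * t.2.1ᵀ) t.2.2 +
      lam * ((∑ i, θbar (colNorm t.1 i / r)) + ∑ i, θbar (colNorm t.2.1 i / r)) +
      beta * ∑ i, ∑ j, θbar (|t.2.2 i j| / s)) :
    globMin FF feasFB = globMin FRbar feasFB ∧ optVal FF feasFB = optVal FRbar feasFB :=
  stmt7_general m n d lam beta hlam hbeta f feasFB FF hFF θ hθ0 hθ1 r s hr hs FR hFR hne hC2 θbar
    hθbar FRbar hFRbar
end
end
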